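/- Let T be a spherically homogeneous rooted tree, let G ≤ Aut(T) be a weakly branch group, let H ≤ G be a prodense subgroup of G, and let u be any vertex of T. Then H_u = φ_u(St_H(u)) is a prodense subgroup of G_u = φ_u(St_G(u)). -/

import Mathlib

open Equiv

namespace PaperDefs


/-! ### Spherically homogeneous rooted trees -/

variable (A : ℕ → Type)

/-- Vertices of the spherically homogeneous rooted tree determined by the
sequence of alphabets `A`: words `a₁a₂⋯aₙ` with `aᵢ ∈ A i`. -/
def Vertex : Type := Σ n : ℕ, ∀ i : Fin n, A i

/-- The prefix relation on vertices. -/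
def IsPref (v w : Vertex A) : Prop :=
  ∃ h : v.1 ≤ w.1, ∀ i : Fin v.1, v.2 i = w.2 (Fin.castLE h i)

/-- The automorphism group of the tree: permutations of the vertex set that
preserve the prefix relation. -/
def treeAut : Subgroup (Perm (Vertex A)) where
  carrier := {g | ∀ v w, IsPref A v w ↔ IsPref A (g v) (g w)}
  one_mem' := by intro v w; simp
  mul_mem' := by
    intro a b ha hb v w
    simpa [Equiv.Perm.mul_apply] using (hb v w).trans (ha (b v) (b w))
  inv_mem' := by
    intro a ha v w
    simpa using (ha (a⁻¹ v) (a⁻¹ w)).symm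

/-- The stabiliser of the vertex `v` in `G`. -/
def stG (G : Subgroup (Perm (Vertex A))) (v : Vertex A) : Subgroup (Perm (Vertex A)) :=
  G ⊓ MulAction.stabilizer (Perm (Vertex A)) v

/-- The rigid stabiliser of the vertex `v` in `G`: elements of `G` fixing every
vertex that does not have `v` as a prefix. -/
def rist (G : Subgroup (Perm (Vertex A))) (v : Vertex A) : Subgroup (Perm (Vertex A)) where
  carrier := {g | g ∈ G ∧ ∀ w, ¬ IsPref A v w → g w = w}
  one_mem' := ⟨G.one_mem, fun w _ => by simp⟩
  mul_mem' := by
    rintro a b ⟨haG, ha⟩ ⟨hbG, hb⟩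
    refine ⟨G.mul_mem haG hbG, fun w hw => ?_⟩
    simp [Equiv.Perm.mul_apply, hb w hw, ha w hw]
  inv_mem' := by
    rintro a ⟨haG, ha⟩
    refine ⟨G.inv_mem haG, fun w hw => ?_⟩
    conv_lhs => rw [← ha w hw]
    simp

/-- The rigid stabiliser of the `n`-th level: the subgroup generated by the rigid
stabilisers of the vertices of level `n`. -/
def ristLevel (G : Subgroup (Perm (Vertex A))) (n : ℕ) : Subgroup (Perm (Vertex A)) :=
  ⨆ (v : Vertex A) (_ : v.1 = n), rist A G v

/-- `G` acts spherically transitively: transitively on every level. -/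
def SphTrans (G : Subgroup (Perm (Vertex A))) : Prop :=
  ∀ v w : Vertex A, v.1 = w.1 → ∃ g ∈ G, g v = w

/-- `G ≤ Aut T` is a weakly branch group. -/
def IsWeaklyBranch (G : Subgroup (Perm (Vertex A))) : Prop :=
  G ≤ treeAut A ∧ SphTrans A G ∧ ∀ v : Vertex A, rist A G v ≠ ⊥

/-- `G ≤ Aut T` is a branch group. -/
def IsBranch (G : Subgroup (Perm (Vertex A))) : Prop :=
  IsWeaklyBranch A G ∧ ∀ n : ℕ, (ristLevel A G n).relIndex G ≠ 0

/-! ### Boundary of the tree -/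

/-- The boundary of the tree: infinite words. -/
def Boundary : Type := ∀ i : ℕ, A i

/-- The length-`n` prefix of a boundary point. -/
def bdryPrefix (ξ : Boundary A) (n : ℕ) : Vertex A := ⟨n, fun i => ξ i⟩

/-- The support of a subgroup `H` on the boundary: boundary points moved by some
element of `H` (a boundary point is moved by a tree automorphism iff one of its
finite prefixes is moved). -/
def supp (H : Subgroup (Perm (Vertex A))) : Set (Boundary A) :=
  {ξ | ∃ h ∈ H, ∃ n : ℕ, h (bdryPrefix A ξ n) ≠ bdryPrefix A ξ n}

/-! ### Sections / projections -/

/-- The shifted alphabet sequence, describing the subtree rooted at a vertex of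
level `n`. -/
def shift (n : ℕ) : ℕ → Type := fun i => A (i + n)

/-- Concatenation of a vertex `v` of level `n` with a vertex of the subtree `T_v`
(viewed in the shifted tree). -/
def concat (n : ℕ) (v : Vertex A) (hv : v.1 = n) (w : Vertex (shift A n)) : Vertex A :=
  ⟨n + w.1, fun i =>
    if h : (i : ℕ) < n then v.2 ⟨(i : ℕ), by omega⟩
    else cast (congrArg A (by have := i.isLt; omega : (i : ℕ) - n + n = (i : ℕ)))
      (w.2 ⟨(i : ℕ) - n, by have := i.isLt; omega⟩)⟩

/-- `projStab A G n v hv` is `G_v = φ_v(St_G(v))`, the image under the projection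
`φ_v` of the stabiliser of `v` in `G`, realised as a subgroup of the automorphisms
of the subtree `T_v` (identified with the tree on the shifted alphabet sequence):
it consists of those `σ` for which some `g ∈ G` stabilises `v` and satisfies
`g (v·w) = v·(σ w)` for every vertex `w` of the subtree. -/
def projStab (G : Subgroup (Perm (Vertex A))) (n : ℕ) (v : Vertex A) (hv : v.1 = n) :
    Subgroup (Perm (Vertex (shift A n))) where
  carrier := {σ | ∃ g ∈ G, g v = v ∧ ∀ w, g (concat A n v hv w) = concat A n v hv (σ w)}
  one_mem' := ⟨1, G.one_mem, by simp, fun w => by simp⟩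
  mul_mem' := by
    rintro σ τ ⟨g, hgG, hgv, hg⟩ ⟨g', hg'G, hg'v, hg'⟩
    refine ⟨g * g', G.mul_mem hgG hg'G, by simp [Equiv.Perm.mul_apply, hg'v, hgv], fun w => ?_⟩
    simp [Equiv.Perm.mul_apply, hg' w, hg (τ w)]
  inv_mem' := by
    rintro σ ⟨g, hgG, hgv, hg⟩
    refine ⟨g⁻¹, G.inv_mem hgG, by simpa using (congrArg (⇑g⁻¹) hgv).symm, fun w => ?_⟩
    have h1 : g (concat A n v hv (σ⁻¹ w)) = concat A n v hv w := by
      rw [hg (σ⁻¹ w)]; simp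
    calc g⁻¹ (concat A n v hv w) = g⁻¹ (g (concat A n v hv (σ⁻¹ w))) := by rw [h1]
      _ = concat A n v hv (σ⁻¹ w) := by simp

/-! ### Group-theoretic notions -/

/-- `H` is a normal subgroup of `K` (both being subgroups of an ambient group). -/
def NormalIn {P : Type*} [Group P] (H K : Subgroup P) : Prop :=
  H ≤ K ∧ ∀ k ∈ K, ∀ h ∈ H, k * h * k⁻¹ ∈ H

/-- `H` is `k`-subnormal in `G`: there is a chain `H = c k ⊴ ⋯ ⊴ c 0 = G`. -/
def SubnormalIn {P : Type*} [Group P] (H G : Subgroup P) (k : ℕ) : Prop :=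
  ∃ c : ℕ → Subgroup P, c 0 = G ∧ c k = H ∧ ∀ i < k, NormalIn (c (i + 1)) (c i)

/-- The iterated derived subgroup `H⁽ᵏ⁾` of a subgroup `H` of an ambient group. -/
def derivedIter {P : Type*} [Group P] (H : Subgroup P) : ℕ → Subgroup P
  | 0 => H
  | k + 1 => ⁅derivedIter H k, derivedIter H k⁆

/-- The class `𝓜𝓕` of groups all of whose maximal subgroups have finite index. -/
def MF (Γ : Type*) [Group Γ] : Prop :=
  ∀ M : Subgroup Γ, IsCoatom M → M.index ≠ 0

/-- Every proper quotient of `Γ` belongs to `𝓜𝓕`. -/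
def QuotientsMF (Γ : Type*) [Group Γ] : Prop :=
  ∀ (N : Subgroup Γ) [N.Normal], N ≠ ⊥ → MF (Γ ⧸ N)

/-- `H` is a prodense subgroup of `Γ`: `HN = Γ` for every nontrivial normal `N ⊴ Γ`. -/
def Prodense {Γ : Type*} [Group Γ] (H : Subgroup Γ) : Prop :=
  ∀ N : Subgroup Γ, N.Normal → N ≠ ⊥ → H ⊔ N = ⊤

/-- `H` is a prodense subgroup of `G`, both being subgroups of an ambient group:
`H ≤ G` and `HN = G` for every nontrivial subgroup `N ≤ G` normal in `G`. -/
def ProdenseIn {P : Type*} [Group P] (H G : Subgroup P) : Prop :=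
  H ≤ G ∧ ∀ N : Subgroup P, N ≤ G → NormalIn N G → N ≠ ⊥ → H ⊔ N = G

/-- `M` is a maximal subgroup of `G` (both subgroups of an ambient group). -/
def MaximalIn {P : Type*} [Group P] (M G : Subgroup P) : Prop :=
  M < G ∧ ∀ K : Subgroup P, M < K → K ≤ G → K = G



/-! ### Auxiliary lemmas for the proof -/

section AuxProof

variable {A : ℕ → Type}

lemma perm_apply_inv_self {α : Type*} (f : Perm α) (x : α) : f (f⁻¹ x) = x :=
  f.apply_symm_apply x

lemma perm_inv_apply_self {α : Type*} (f : Perm α) (x : α) : f⁻¹ (f x) = x :=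
  f.symm_apply_apply x

lemma mem_treeAut_iff {g : Perm (Vertex A)} :
    g ∈ treeAut A ↔ ∀ v w, IsPref A v w ↔ IsPref A (g v) (g w) := Iff.rfl

lemma mem_rist_iff {G : Subgroup (Perm (Vertex A))} {v : Vertex A} {k : Perm (Vertex A)} :
    k ∈ rist A G v ↔ k ∈ G ∧ ∀ w, ¬ IsPref A v w → k w = w := Iff.rfl

lemma mem_projStab_iff {G : Subgroup (Perm (Vertex A))} {n : ℕ} {v : Vertex A} {hv : v.1 = n}
    {σ : Perm (Vertex (shift A n))} :
    σ ∈ projStab A G n v hv ↔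
      ∃ g ∈ G, g v = v ∧ ∀ w, g (concat A n v hv w) = concat A n v hv (σ w) := Iff.rfl

lemma vertex_ext {B : ℕ → Type} {v w : Vertex B} (h1 : v.1 = w.1)
    (h2 : ∀ (i : ℕ) (hv : i < v.1) (hw : i < w.1), v.2 ⟨i, hv⟩ = w.2 ⟨i, hw⟩) : v = w := by
  obtain ⟨n, f⟩ := v
  obtain ⟨m, g⟩ := w
  obtain rfl : n = m := h1
  have hfg : f = g := funext fun i => h2 i i.2 i.2
  rw [hfg]

lemma isPref_refl (v : Vertex A) : IsPref A v v :=
  ⟨le_refl _, fun _ => rfl⟩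

lemma isPref_trans {a b c : Vertex A} (h1 : IsPref A a b) (h2 : IsPref A b c) : IsPref A a c := by
  obtain ⟨hab, pab⟩ := h1
  obtain ⟨hbc, pbc⟩ := h2
  exact ⟨hab.trans hbc, fun i => by
    rw [pab i, pbc (Fin.castLE hab i)]
    exact rfl⟩

lemma isPref_eq {v w : Vertex A} (h : IsPref A v w) (hl : v.1 = w.1) : v = w := by
  obtain ⟨h1, h2⟩ := h
  exact vertex_ext hl fun i hv hw => h2 ⟨i, hv⟩

lemma isPref_unique {a b c : Vertex A} (h1 : IsPref A a c) (h2 : IsPref A b c)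
    (hl : a.1 = b.1) : a = b := by
  refine vertex_ext hl fun i ha hb => ?_
  rw [h1.2 ⟨i, ha⟩, h2.2 ⟨i, hb⟩]
  exact rfl

lemma len_le_apply {g : Perm (Vertex A)} (hg : g ∈ treeAut A) :
    ∀ (n : ℕ) (v : Vertex A), v.1 = n → n ≤ (g v).1 := by
  intro n
  induction n with
  | zero => intro v _; exact Nat.zero_le _
  | succ n ih =>
    intro v hv
    have hnv : n ≤ v.1 := by omega
    set p : Vertex A := ⟨n, fun i => v.2 (Fin.castLE hnv i)⟩ with hp
    have hpv : IsPref A p v := ⟨hnv, fun i => rfl⟩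
    have h2 : IsPref A (g p) (g v) := (hg p v).mp hpv
    have hle : (g p).1 ≤ (g v).1 := h2.1
    have h3 : n ≤ (g p).1 := ih p rfl
    by_contra hcon
    push_neg at hcon
    have h4 : (g p).1 = (g v).1 := by omega
    have h5 : g p = g v := isPref_eq h2 h4
    have h6 : p = v := g.injective h5
    have h7 : n = v.1 := congrArg Sigma.fst h6
    omega

lemma len_apply {g : Perm (Vertex A)} (hg : g ∈ treeAut A) (v : Vertex A) :
    (g v).1 = v.1 := by
  have h1 := len_le_apply hg v.1 v rfl
  have h2 := len_le_apply ((treeAut A).inv_mem hg) (g v).1 (g v) rfl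
  rw [perm_inv_apply_self] at h2
  omega

lemma concat_fst (n : ℕ) (v : Vertex A) (hv : v.1 = n) (w : Vertex (shift A n)) :
    (concat A n v hv w).1 = n + w.1 := rfl

lemma cast_comp {B : ℕ → Type} (x : Vertex B) {j k : ℕ} (hjk : j = k)
    (hj : j < x.1) (hk : k < x.1) (e : B j = B k) :
    cast e (x.2 ⟨j, hj⟩) = x.2 ⟨k, hk⟩ := by
  subst hjk
  exact cast_eq e _

lemma concat_snd_lt (n : ℕ) (v : Vertex A) (hv : v.1 = n) (w : Vertex (shift A n))
    (j : ℕ) (hj : j < n + w.1) (hjn : j < n) (hjv : j < v.1) :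
    (concat A n v hv w).2 ⟨j, hj⟩ = v.2 ⟨j, hjv⟩ := by
  show dite _ _ _ = _
  rw [dif_pos (show ((⟨j, hj⟩ : Fin (n + w.1)) : ℕ) < n from hjn)]

lemma concat_snd_ge (n : ℕ) (v : Vertex A) (hv : v.1 = n) (w : Vertex (shift A n))
    (j : ℕ) (hj : j < n + w.1) (hjn : ¬ j < n) (e : A (j - n + n) = A j) (hjw : j - n < w.1) :
    (concat A n v hv w).2 ⟨j, hj⟩ = cast e (w.2 ⟨j - n, hjw⟩) := by
  show dite _ _ _ = _
  rw [dif_neg (show ¬ ((⟨j, hj⟩ : Fin (n + w.1)) : ℕ) < n from hjn)]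

def unconcat (n : ℕ) (x : Vertex A) : Vertex (shift A n) :=
  ⟨x.1 - n, fun i => x.2 ⟨(i : ℕ) + n, by have := i.2; omega⟩⟩

lemma unconcat_concat (n : ℕ) (v : Vertex A) (hv : v.1 = n) (w : Vertex (shift A n)) :
    unconcat n (concat A n v hv w) = w := by
  have e1 : (concat A n v hv w).1 = n + w.1 := rfl
  have e2 : (unconcat n (concat A n v hv w)).1 = n + w.1 - n := rfl
  refine vertex_ext (by omega) fun i hi hw => ?_
  show (concat A n v hv w).2 ⟨i + n, by omega⟩ = w.2 ⟨i, hw⟩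
  rw [concat_snd_ge n v hv w (i + n) (by omega) (by omega)
    (congrArg A (by omega)) (by omega)]
  exact cast_comp (B := shift A n) w (show i + n - n = i by omega) _ _ _

lemma concat_unconcat (n : ℕ) (v : Vertex A) (hv : v.1 = n) (x : Vertex A)
    (hpref : IsPref A v x) :
    concat A n v hv (unconcat n x) = x := by
  have hnx : n ≤ x.1 := hv ▸ hpref.1
  have e1 : (concat A n v hv (unconcat n x)).1 = n + (unconcat n x).1 := rfl
  have e2 : (unconcat n x).1 = x.1 - n := rfl
  refine vertex_ext (by omega) fun j hj hx => ?_
  by_cases hjn : j < n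
  · rw [concat_snd_lt n v hv (unconcat n x) j (by omega) hjn (by omega)]
    exact hpref.2 ⟨j, by omega⟩
  · rw [concat_snd_ge n v hv (unconcat n x) j (by omega) hjn
      (congrArg A (by omega)) (by omega)]
    show cast _ (x.2 ⟨j - n + n, by omega⟩) = x.2 ⟨j, hx⟩
    exact cast_comp x (by omega) _ _ _

lemma concat_injective (n : ℕ) (v : Vertex A) (hv : v.1 = n) :
    Function.Injective (concat A n v hv) := by
  intro w w' h
  have h2 := congrArg (unconcat n) h
  rwa [unconcat_concat, unconcat_concat] at h2

lemma isPref_concat (n : ℕ) (v : Vertex A) (hv : v.1 = n) (w : Vertex (shift A n)) :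
    IsPref A v (concat A n v hv w) := by
  have e1 : (concat A n v hv w).1 = n + w.1 := rfl
  refine ⟨by omega, fun i => ?_⟩
  have hi : (i : ℕ) < n := by have := i.2; omega
  exact (concat_snd_lt n v hv w i (by omega) hi i.2).symm

lemma sec_inv {g : Perm (Vertex A)} {u : Vertex A} {σ : Perm (Vertex (shift A u.1))}
    (h : ∀ w, g (concat A u.1 u rfl w) = concat A u.1 u rfl (σ w)) (w : Vertex (shift A u.1)) :
    g⁻¹ (concat A u.1 u rfl w) = concat A u.1 u rfl (σ⁻¹ w) := by
  have h2 := h (σ⁻¹ w)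
  rw [perm_apply_inv_self] at h2
  rw [← h2, perm_inv_apply_self]

lemma isPref_apply_concat {g : Perm (Vertex A)} (hg : g ∈ treeAut A) {u : Vertex A}
    (hgu : g u = u) (w : Vertex (shift A u.1)) :
    IsPref A u (g (concat A u.1 u rfl w)) := by
  have := (hg u (concat A u.1 u rfl w)).mp (isPref_concat u.1 u rfl w)
  rwa [hgu] at this

/-- The restriction of `g` (stabilising `u`) to the subtree below `u`. -/
def restrPerm (g : Perm (Vertex A)) (u : Vertex A) (hg : g ∈ treeAut A) (hgu : g u = u) :
    Perm (Vertex (shift A u.1)) where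
  toFun w := unconcat u.1 (g (concat A u.1 u rfl w))
  invFun w := unconcat u.1 (g⁻¹ (concat A u.1 u rfl w))
  left_inv := by
    intro w
    have hpref := isPref_apply_concat hg hgu w
    simp only
    rw [concat_unconcat u.1 u rfl _ hpref, perm_inv_apply_self, unconcat_concat]
  right_inv := by
    intro w
    have hginv : g⁻¹ u = u := by
      conv_lhs => rw [← hgu]
      exact perm_inv_apply_self g u
    have hpref := isPref_apply_concat ((treeAut A).inv_mem hg) hginv w
    simp only
    rw [concat_unconcat u.1 u rfl _ hpref, perm_apply_inv_self, unconcat_concat]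

lemma restr_spec (g : Perm (Vertex A)) (u : Vertex A) (hg : g ∈ treeAut A) (hgu : g u = u)
    (w : Vertex (shift A u.1)) :
    g (concat A u.1 u rfl w) = concat A u.1 u rfl (restrPerm g u hg hgu w) := by
  show g (concat A u.1 u rfl w) = concat A u.1 u rfl (unconcat u.1 (g (concat A u.1 u rfl w)))
  rw [concat_unconcat u.1 u rfl _ (isPref_apply_concat hg hgu w)]

lemma rist_fix_level {G : Subgroup (Perm (Vertex A))} (hGt : G ≤ treeAut A)
    {v : Vertex A} {k : Perm (Vertex A)} (hk : k ∈ rist A G v)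
    {x : Vertex A} (hx : x.1 = v.1) : k x = x := by
  obtain ⟨hkG, hkfix⟩ := mem_rist_iff.mp hk
  by_cases hxv : x = v
  · subst hxv
    by_contra hne
    have h1 : (k x).1 = x.1 := len_apply (hGt hkG) x
    have h2 : ¬ IsPref A x (k x) := fun hp => hne ((isPref_eq hp h1.symm).symm)
    have h3 := hkfix (k x) h2
    exact hne (k.injective h3)
  · exact hkfix x (fun hp => hxv ((isPref_eq hp hx.symm).symm))

/-- The subgroup of elements of `G` fixing level `u.1` whose section at `u` lies in `N`. -/
def bigM (G : Subgroup (Perm (Vertex A))) (u : Vertex A)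
    (N : Subgroup (Perm (Vertex (shift A u.1)))) : Subgroup (Perm (Vertex A)) where
  carrier := {m | m ∈ G ∧ (∀ x : Vertex A, x.1 = u.1 → m x = x) ∧
    ∃ σ ∈ N, ∀ w, m (concat A u.1 u rfl w) = concat A u.1 u rfl (σ w)}
  one_mem' := ⟨G.one_mem, fun _ _ => rfl, 1, N.one_mem, fun _ => rfl⟩
  mul_mem' := by
    rintro a b ⟨haG, haf, σ, hσ, ha⟩ ⟨hbG, hbf, τ, hτ, hb⟩
    refine ⟨G.mul_mem haG hbG, fun x hx => ?_, σ * τ, N.mul_mem hσ hτ, fun w => ?_⟩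
    · show a (b x) = x
      rw [hbf x hx, haf x hx]
    · show a (b _) = _
      rw [hb w, ha (τ w)]
      rfl
  inv_mem' := by
    rintro a ⟨haG, haf, σ, hσ, ha⟩
    refine ⟨G.inv_mem haG, fun x hx => ?_, σ⁻¹, N.inv_mem hσ, fun w => sec_inv ha w⟩
    conv_lhs => rw [← haf x hx]
    exact perm_inv_apply_self a x

lemma mem_bigM_iff {G : Subgroup (Perm (Vertex A))} {u : Vertex A}
    {N : Subgroup (Perm (Vertex (shift A u.1)))} {m : Perm (Vertex A)} :
    m ∈ bigM G u N ↔ m ∈ G ∧ (∀ x : Vertex A, x.1 = u.1 → m x = x) ∧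
      ∃ σ ∈ N, ∀ w, m (concat A u.1 u rfl w) = concat A u.1 u rfl (σ w) := Iff.rfl

lemma sup_decomp {P : Type*} [Group P] {H M G : Subgroup P} (hHG : H ≤ G)
    (hconj : ∀ g ∈ G, ∀ m ∈ M, g * m * g⁻¹ ∈ M) (hsup : H ⊔ M = G) :
    ∀ g ∈ G, ∃ h ∈ H, ∃ m ∈ M, g = h * m := by
  intro g hg
  have hmem : g ∈ H ⊔ M := hsup.symm ▸ hg
  let K : Subgroup P :=
    { carrier := {x | ∃ h ∈ H, ∃ m ∈ M, x = h * m}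
      one_mem' := ⟨1, H.one_mem, 1, M.one_mem, by simp⟩
      mul_mem' := by
        rintro a b ⟨h1, hh1, m1, hm1, rfl⟩ ⟨h2, hh2, m2, hm2, rfl⟩
        refine ⟨h1 * h2, H.mul_mem hh1 hh2, (h2⁻¹ * m1 * h2) * m2, M.mul_mem ?_ hm2, by group⟩
        have := hconj h2⁻¹ (G.inv_mem (hHG hh2)) m1 hm1
        simpa using this
      inv_mem' := by
        rintro a ⟨h1, hh1, m1, hm1, rfl⟩
        exact ⟨h1⁻¹, H.inv_mem hh1, h1 * m1⁻¹ * h1⁻¹,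
          hconj h1 (hHG hh1) m1⁻¹ (M.inv_mem hm1), by group⟩ }
  have hK : H ⊔ M ≤ K := sup_le (fun h hh => ⟨h, hh, 1, M.one_mem, by simp⟩)
    (fun m hm => ⟨1, H.one_mem, m, hm, by simp⟩)
  exact hK hmem

end AuxProof

/-- Projections of prodense subgroups of weakly branch groups
are prodense: if `H` is prodense in `G`, then `H_u = φ_u(St_H(u))` is prodense
in `G_u = φ_u(St_G(u))`. -/
theorem projection_prodense
    (A : ℕ → Type) [∀ i, Fintype (A i)] (hcard : ∀ i, 2 ≤ Fintype.card (A i))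
    (G H : Subgroup (Perm (Vertex A))) (hG : IsWeaklyBranch A G)
    (hH : ProdenseIn H G) (u : Vertex A) :
    ProdenseIn (projStab A H u.1 u rfl) (projStab A G u.1 u rfl) := by
  classical
  obtain ⟨hGt, -, hrist⟩ := hG
  obtain ⟨hHG, hpro⟩ := hH
  have hHuGu : projStab A H u.1 u rfl ≤ projStab A G u.1 u rfl := by
    rintro σ ⟨g, hgH, hgu, hgs⟩
    exact ⟨g, hHG hgH, hgu, hgs⟩
  refine ⟨hHuGu, ?_⟩
  intro N hNle hNnorm hNne
  -- the generating set of the normal subgroup M'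
  set S : Set (Perm (Vertex A)) :=
    {x | ∃ g ∈ G, ∃ k ∈ rist A G u,
      (∃ σ ∈ N, ∀ w, k (concat A u.1 u rfl w) = concat A u.1 u rfl (σ w)) ∧
      x = g * k * g⁻¹} with hSdef
  set M' : Subgroup (Perm (Vertex A)) := Subgroup.closure S with hM'def
  have hSsub : S ⊆ (bigM G u N : Set (Perm (Vertex A))) := by
    rintro x ⟨g, hgG, k, hkr, ⟨σ, hσN, hks⟩, rfl⟩
    have hkG : k ∈ G := (mem_rist_iff.mp hkr).1
    refine ⟨G.mul_mem (G.mul_mem hgG hkG) (G.inv_mem hgG), fun y hy => ?_, ?_⟩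
    · have h1 : (g⁻¹ y).1 = u.1 := by
        rw [len_apply (hGt (G.inv_mem hgG)) y]; exact hy
      show g (k (g⁻¹ y)) = y
      rw [rist_fix_level hGt hkr h1, perm_apply_inv_self]
    · by_cases hgu : g u = u
      · set τ := restrPerm g u (hGt hgG) hgu with hτdef
        have hτs : ∀ w, g (concat A u.1 u rfl w) = concat A u.1 u rfl (τ w) :=
          fun w => restr_spec g u (hGt hgG) hgu w
        have hτGu : τ ∈ projStab A G u.1 u rfl := ⟨g, hgG, hgu, hτs⟩
        refine ⟨τ * σ * τ⁻¹, hNnorm.2 τ hτGu σ hσN, fun w => ?_⟩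
        show g (k (g⁻¹ (concat A u.1 u rfl w))) = _
        rw [sec_inv hτs w, hks (τ⁻¹ w), hτs (σ (τ⁻¹ w))]
        rfl
      · refine ⟨1, N.one_mem, fun w => ?_⟩
        have hnp : ¬ IsPref A u (g⁻¹ (concat A u.1 u rfl w)) := by
          intro hp
          have h3 := (hGt hgG u _).mp hp
          rw [perm_apply_inv_self] at h3
          exact hgu (isPref_unique h3 (isPref_concat u.1 u rfl w)
            (len_apply (hGt hgG) u))
        show g (k (g⁻¹ (concat A u.1 u rfl w))) = _
        rw [(mem_rist_iff.mp hkr).2 _ hnp, perm_apply_inv_self]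
        rfl
  have hM'le : M' ≤ bigM G u N := (Subgroup.closure_le _).mpr hSsub
  have hM'G : M' ≤ G := fun x hx => (hM'le hx).1
  have hconj : ∀ g ∈ G, ∀ m ∈ M', g * m * g⁻¹ ∈ M' := by
    intro g hgG m hm
    refine Subgroup.closure_induction (p := fun x _ => g * x * g⁻¹ ∈ M')
      (fun x hx => ?_) ?_ (fun x y _ _ hpx hpy => ?_) (fun x _ hpx => ?_) hm
    · obtain ⟨g₁, hg₁G, k, hk, hkc, rfl⟩ := hx
      exact Subgroup.subset_closure
        ⟨g * g₁, G.mul_mem hgG hg₁G, k, hk, hkc, by group⟩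
    · have h : g * 1 * g⁻¹ = 1 := by group
      show g * 1 * g⁻¹ ∈ M'
      rw [h]; exact M'.one_mem
    · have h : g * (x * y) * g⁻¹ = (g * x * g⁻¹) * (g * y * g⁻¹) := by group
      show g * (x * y) * g⁻¹ ∈ M'
      rw [h]; exact M'.mul_mem hpx hpy
    · have h : g * x⁻¹ * g⁻¹ = (g * x * g⁻¹)⁻¹ := by group
      show g * x⁻¹ * g⁻¹ ∈ M'
      rw [h]; exact M'.inv_mem hpx
  -- a nontrivial element of M'
  obtain ⟨⟨σ₀, hσ₀N⟩, hσ₀ne'⟩ := Subgroup.ne_bot_iff_exists_ne_one.mp hNne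
  have hσ₀ne : σ₀ ≠ 1 := by simpa [Subtype.ext_iff] using hσ₀ne'
  obtain ⟨g₀, hg₀G, hg₀u, hg₀s⟩ := mem_projStab_iff.mp (hNle hσ₀N)
  obtain ⟨w₀, hw₀⟩ : ∃ w, σ₀ w ≠ w := by
    by_contra hcon; push_neg at hcon; exact hσ₀ne (Equiv.ext hcon)
  have hlenσ : (σ₀ w₀).1 = w₀.1 := by
    have h1 : (g₀ (concat A u.1 u rfl w₀)).1 = (concat A u.1 u rfl w₀).1 :=
      len_apply (hGt hg₀G) _
    rw [hg₀s w₀, concat_fst, concat_fst] at h1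
    omega
  obtain ⟨⟨r, hrmem⟩, hrne'⟩ :=
    Subgroup.ne_bot_iff_exists_ne_one.mp (hrist (concat A u.1 u rfl w₀))
  have hrne : r ≠ 1 := by simpa [Subtype.ext_iff] using hrne'
  have hrG : r ∈ G := (mem_rist_iff.mp hrmem).1
  have hrfix : ∀ z, ¬ IsPref A (concat A u.1 u rfl w₀) z → r z = z :=
    (mem_rist_iff.mp hrmem).2
  have hru : r u = u := by
    apply hrfix
    intro hp
    have h1 := hp.1
    rw [concat_fst] at h1
    have hw₀pos : 0 < w₀.1 := by
      rcases Nat.eq_zero_or_pos w₀.1 with h0 | h; swap; · exact h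
      exfalso
      exact hw₀ (vertex_ext (by omega) (fun i hi hw => by omega))
    omega
  set ρ := restrPerm r u (hGt hrG) hru with hρdef
  have hρs : ∀ w, r (concat A u.1 u rfl w) = concat A u.1 u rfl (ρ w) :=
    fun w => restr_spec r u (hGt hrG) hru w
  have hρGu : ρ ∈ projStab A G u.1 u rfl := ⟨r, hrG, hru, hρs⟩
  set c := g₀ * r * g₀⁻¹ * r⁻¹ with hcdef
  set σc := σ₀ * ρ * σ₀⁻¹ * ρ⁻¹ with hσcdef
  have hσcN : σc ∈ N := by
    have h1 : ρ * σ₀⁻¹ * ρ⁻¹ ∈ N := hNnorm.2 ρ hρGu σ₀⁻¹ (N.inv_mem hσ₀N)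
    have h2 := N.mul_mem hσ₀N h1
    have h3 : σc = σ₀ * (ρ * σ₀⁻¹ * ρ⁻¹) := by rw [hσcdef]; group
    rw [h3]; exact h2
  have hcs : ∀ w, c (concat A u.1 u rfl w) = concat A u.1 u rfl (σc w) := by
    intro w
    show g₀ (r (g₀⁻¹ (r⁻¹ (concat A u.1 u rfl w)))) = _
    rw [sec_inv hρs, sec_inv hg₀s, hρs, hg₀s]
    rfl
  have hrinvfix : ∀ z, ¬ IsPref A (concat A u.1 u rfl w₀) z → r⁻¹ z = z :=
    (mem_rist_iff.mp ((rist A G (concat A u.1 u rfl w₀)).inv_mem hrmem)).2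
  have hcG : c ∈ G :=
    G.mul_mem (G.mul_mem (G.mul_mem hg₀G hrG) (G.inv_mem hg₀G)) (G.inv_mem hrG)
  have hcrist : c ∈ rist A G u := by
    refine mem_rist_iff.mpr ⟨hcG, fun z hz => ?_⟩
    have hz1 : ¬ IsPref A (concat A u.1 u rfl w₀) z :=
      fun hp => hz (isPref_trans (isPref_concat u.1 u rfl w₀) hp)
    have hz2 : ¬ IsPref A (concat A u.1 u rfl w₀) (g₀⁻¹ z) := by
      intro hp
      have h3 := (hGt hg₀G _ _).mp hp
      rw [perm_apply_inv_self, hg₀s w₀] at h3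
      exact hz (isPref_trans (isPref_concat u.1 u rfl (σ₀ w₀)) h3)
    show g₀ (r (g₀⁻¹ (r⁻¹ z))) = z
    rw [hrinvfix z hz1, hrfix _ hz2, perm_apply_inv_self]
  have hcS : c ∈ S := ⟨1, G.one_mem, c, hcrist, ⟨σc, hσcN, hcs⟩, by group⟩
  have hcne : c ≠ 1 := by
    obtain ⟨y, hy⟩ : ∃ y, r y ≠ y := by
      by_contra hcon; push_neg at hcon; exact hrne (Equiv.ext hcon)
    have hyp : IsPref A (concat A u.1 u rfl w₀) y := by
      by_contra hp; exact hy (hrfix y hp)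
    intro h1
    have hkey : c (r y) = y := by
      show g₀ (r (g₀⁻¹ (r⁻¹ (r y)))) = y
      rw [perm_inv_apply_self]
      have hz2 : ¬ IsPref A (concat A u.1 u rfl w₀) (g₀⁻¹ y) := by
        intro hp
        have h3 := (hGt hg₀G _ _).mp hp
        rw [perm_apply_inv_self, hg₀s w₀] at h3
        have hl : (concat A u.1 u rfl (σ₀ w₀)).1 = (concat A u.1 u rfl w₀).1 := by
          rw [concat_fst, concat_fst, hlenσ]
        exact hw₀ (concat_injective u.1 u rfl (isPref_unique h3 hyp hl))
      rw [hrfix _ hz2, perm_apply_inv_self]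
    rw [h1] at hkey
    simp only [Perm.one_apply] at hkey
    exact hy hkey
  have hM'ne : M' ≠ ⊥ := by
    intro hbot
    have hcM' : c ∈ M' := Subgroup.subset_closure hcS
    rw [hbot, Subgroup.mem_bot] at hcM'
    exact hcne hcM'
  have hsup : H ⊔ M' = G := hpro M' hM'G ⟨hM'G, hconj⟩ hM'ne
  apply le_antisymm
  · exact sup_le hHuGu hNle
  · rintro x ⟨g, hgG, hgu, hgs⟩
    obtain ⟨h, hhH, m, hmM', hgm⟩ := sup_decomp hHG hconj hsup g hgG
    obtain ⟨hmG, hmfix, σm, hσmN, hms⟩ := hM'le hmM'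
    have hmu : m u = u := hmfix u rfl
    have hhu : h u = u := by
      have h1 : g u = h (m u) := by rw [hgm]; rfl
      rw [hmu, hgu] at h1
      exact h1.symm
    have hhs : ∀ w, h (concat A u.1 u rfl w) = concat A u.1 u rfl ((x * σm⁻¹) w) := by
      intro w
      have h2 : h = g * m⁻¹ := by rw [hgm]; group
      rw [h2]
      show g (m⁻¹ (concat A u.1 u rfl w)) = _
      rw [sec_inv hms, hgs]
      rfl
    have hxσ : x * σm⁻¹ ∈ projStab A H u.1 u rfl := ⟨h, hhH, hhu, hhs⟩
    have hfin : (x * σm⁻¹) * σm ∈ projStab A H u.1 u rfl ⊔ N :=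
      Subgroup.mul_mem _
        ((le_sup_left : projStab A H u.1 u rfl ≤ _) hxσ)
        ((le_sup_right : N ≤ _) hσmN)
    have hx2 : (x * σm⁻¹) * σm = x := by group
    rwa [hx2] at hfin


end PaperDefs
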